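/- Let μ_u and μ_v be finite Borel measures on a space X associated to measurable functions u, v : X → ℝ, satisfying the comparison principle: for every Borel set of the form {u < v − c} (c ∈ ℝ), μ_v({u < v − c}) ≤ μ_u({u < v − c}), and symmetrically μ_u({v < u − c}) ≤ μ_v({v < u − c}). Let ψ be a low energy weight with u − v ψ-integrable. If additionally u ≥ v, then ∫_X ψ(u−v) dμ_u ≤ ∫_X ψ(u−v) dμ_v. -/
import Mathlib


open MeasureTheory

/-- Abstract comparison-principle estimate: if the measures `μu`, `μv` satisfy the
comparison principle on sublevel sets and `u ≥ v`, then
`∫ ψ(u−v) dμu ≤ ∫ ψ(u−v) dμv` for a low energy weight `ψ`. -/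
theorem comparison_energy_estimate {X : Type*} [MeasurableSpace X]
    (μu μv : Measure X) [IsFiniteMeasure μu] [IsFiniteMeasure μv]
    (u v : X → ℝ) (humeas : Measurable u) (hvmeas : Measurable v)
    (hcomp₁ : ∀ c : ℝ, μv {x | u x < v x - c} ≤ μu {x | u x < v x - c})
    (hcomp₂ : ∀ c : ℝ, μu {x | v x < u x - c} ≤ μv {x | v x < u x - c})
    (ψ : ℝ → ℝ)
    (heven : ∀ t : ℝ, ψ (-t) = ψ t)
    (hcont : Continuous ψ)
    (hzero : ψ 0 = 0)
    (hmono : MonotoneOn ψ (Set.Ioi (0 : ℝ)))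
    (hdiff : DifferentiableOn ℝ ψ (Set.Ioi (0 : ℝ)))
    (hint : (∫⁻ x, ENNReal.ofReal (ψ (u x - v x)) ∂μv) < ⊤)
    (huv : ∀ x, v x ≤ u x) :
    (∫⁻ x, ENNReal.ofReal (ψ (u x - v x)) ∂μu)
      ≤ ∫⁻ x, ENNReal.ofReal (ψ (u x - v x)) ∂μv := by
  have hψm : Measurable fun x => ψ (u x - v x) :=
    hcont.measurable.comp (humeas.sub hvmeas)
  -- ψ is nonnegative on [0, ∞)
  have hψnn : ∀ s : ℝ, 0 ≤ s → 0 ≤ ψ s := by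
    intro s hs
    rcases hs.eq_or_lt with h | h
    · simp [← h, hzero]
    · have htend : Filter.Tendsto ψ (nhdsWithin 0 (Set.Ioi 0)) (nhds 0) := by
        simpa [hzero] using (hcont.tendsto 0).mono_left nhdsWithin_le_nhds
      refine le_of_tendsto htend ?_
      filter_upwards [Ioc_mem_nhdsGT_of_mem (Set.left_mem_Ico.2 h)] with s' hs'
      exact hmono hs'.1 h hs'.2
  have hnn_u : ∀ x, 0 ≤ ψ (u x - v x) := fun x => hψnn _ (sub_nonneg.2 (huv x))
  -- key superlevel set comparison
  have key : ∀ t : ℝ, 0 < t →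
      μu {x | t < ψ (u x - v x)} ≤ μv {x | t < ψ (u x - v x)} := by
    intro t ht
    set S := {s : ℝ | 0 < s ∧ t < ψ s} with hSdef
    by_cases hS : S.Nonempty
    · have hup : ∀ a ∈ S, ∀ b, a < b → b ∈ S := by
        intro a ha b hab
        exact ⟨ha.1.trans hab, lt_of_lt_of_le ha.2 (hmono ha.1 (ha.1.trans hab) hab.le)⟩
      have hopen : IsOpen S := by
        have : S = Set.Ioi 0 ∩ ψ ⁻¹' Set.Ioi t := by
          ext s; simp [hSdef, Set.mem_setOf_eq]
        rw [this]
        exact isOpen_Ioi.inter (isOpen_Ioi.preimage hcont)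
      have hbdd : BddBelow S := ⟨0, fun y hy => hy.1.le⟩
      set c := sInf S with hc
      have hSc : S = Set.Ioi c := by
        ext s
        constructor
        · intro hs
          rcases (csInf_le hbdd hs).lt_or_eq with h | h
          · exact h
          · exfalso
            rcases Metric.isOpen_iff.1 hopen s hs with ⟨ε, hε, hball⟩
            have hmem : s - ε / 2 ∈ S := by
              apply hball
              simp only [Metric.mem_ball, Real.dist_eq]
              rw [abs_of_nonpos (by linarith)]
              linarith
            have := csInf_le hbdd hmem
            rw [← h] at this
            linarith
        · intro hs
          obtain ⟨a, haS, hac⟩ := exists_lt_of_csInf_lt hS hs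
          exact hup a haS s hac
      have hset : {x | t < ψ (u x - v x)} = {x | v x < u x - c} := by
        ext x
        simp only [Set.mem_setOf_eq]
        constructor
        · intro hx
          have hpos : 0 < u x - v x := by
            by_contra h
            have h0 : u x - v x = 0 :=
              le_antisymm (not_lt.1 h) (sub_nonneg.2 (huv x))
            rw [h0, hzero] at hx; linarith
          have hmem : u x - v x ∈ S := ⟨hpos, hx⟩
          rw [hSc] at hmem
          simpa [Set.mem_Ioi] using (by linarith [Set.mem_Ioi.1 hmem] : v x < u x - c)
        · intro hx
          have hmem : u x - v x ∈ S := by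
            rw [hSc]; exact Set.mem_Ioi.2 (by linarith)
          exact hmem.2
      rw [hset]
      exact hcomp₂ c
    · have hempty : {x | t < ψ (u x - v x)} = ∅ := by
        ext x
        simp only [Set.mem_setOf_eq, Set.mem_empty_iff_false, iff_false, not_lt]
        by_contra h
        push_neg at h
        have hpos : 0 < u x - v x := by
          by_contra h'
          have h0 : u x - v x = 0 :=
            le_antisymm (not_lt.1 h') (sub_nonneg.2 (huv x))
          rw [h0, hzero] at h; linarith
        exact hS ⟨u x - v x, hpos, h⟩
      simp [hempty]
  rw [lintegral_eq_lintegral_meas_lt μu (Filter.Eventually.of_forall hnn_u)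
        hψm.aemeasurable,
      lintegral_eq_lintegral_meas_lt μv (Filter.Eventually.of_forall hnn_u)
        hψm.aemeasurable]
  refine lintegral_mono_ae ?_
  filter_upwards [ae_restrict_mem measurableSet_Ioi] with t ht
  exact key t ht
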